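/- arXiv:0812.2017 — 4 statements merged into one kernel-verified Lean document; each statement's English description precedes it below -/
import Mathlib

section
/- Let (X, 𝒳, μ) be a probability space, let G be a countable amenable group, and let T be a measure-preserving action of G on X. Let Φ be a left Følner sequence in G. Then for all f ∈ L²(μ), the averages (1/|Φ_N|) Σ_{g ∈ Φ_N} f ∘ T_g converge in L²(μ) to Pf, where P is the orthogonal projection of L²(μ) onto the closed subspace of T-invariant functions (functions h with h ∘ T_g = h for all g ∈ G). -/
open MeasureTheory Filter Topology

/-- A left Følner sequence: finite nonempty sets with `|Φ N ∩ gΦ N|/|Φ N| → 1` for all `g`. -/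
def IsLeftFolner {G : Type*} [Group G] [DecidableEq G] (Φ : ℕ → Finset G) : Prop :=
  (∀ N, (Φ N).Nonempty) ∧
    ∀ g : G, Tendsto
      (fun N => (((Φ N) ∩ (Φ N).image (fun x => g * x)).card : ℝ) / ((Φ N).card : ℝ))
      atTop (𝓝 1)

/-- A right Følner sequence: finite nonempty sets with `|Φ N ∩ Φ N g|/|Φ N| → 1` for all `g`. -/
def IsRightFolner {G : Type*} [Group G] [DecidableEq G] (Φ : ℕ → Finset G) : Prop :=
  (∀ N, (Φ N).Nonempty) ∧
    ∀ g : G, Tendsto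
      (fun N => (((Φ N) ∩ (Φ N).image (fun x => x * g)).card : ℝ) / ((Φ N).card : ℝ))
      atTop (𝓝 1)

/-- A two-sided Følner sequence is both a left and a right Følner sequence. -/
def IsTwoSidedFolner {G : Type*} [Group G] [DecidableEq G] (Φ : ℕ → Finset G) : Prop :=
  IsLeftFolner Φ ∧ IsRightFolner Φ

open Finset
open scoped ENNReal

/-!
The Koopman operators `U g v = v ∘ T g` are linear isometries of `L²(μ)` with
`U a ∘ U b = U (b * a)`, and the Følner averages `A_N = |Φ_N|⁻¹ ∑_{a ∈ Φ_N} U a` are contractions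
fixing the subspace `M` of invariant vectors. On a coboundary `U g v - v` the average `A_N`
telescopes to a difference of sums over `g Φ_N \ Φ_N` and `Φ_N \ g Φ_N`, so it tends to zero by
the Følner property; since the `A_N` are equicontinuous, the same holds on the closed span of the
coboundaries. That closed span is `Mᗮ`: a vector `u` orthogonal to every coboundary satisfies
`⟪U g u, u⟫ = ‖u‖² = ‖U g u‖ ‖u‖`, the equality case of Cauchy–Schwarz, so `U g u = u`.
Writing `v = Pv + (v - Pv)` gives `A_N v → Pv`.
-/

theorem IsLeftFolner.tendsto_card_sdiff_div {G : Type*} [Group G] [DecidableEq G]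
    {Φ : ℕ → Finset G} (hΦ : IsLeftFolner Φ) (g : G) :
    Tendsto (fun N => (#(Φ N \ (Φ N).image (g * ·)) : ℝ) / #(Φ N)) atTop (𝓝 0) := by
  have hcompl : ∀ N, (#(Φ N \ (Φ N).image (g * ·)) : ℝ) / #(Φ N)
      = 1 - #(Φ N ∩ (Φ N).image (g * ·)) / #(Φ N) := by
    intro N
    rw [eq_sub_iff_add_eq, ← add_div, ← Nat.cast_add, add_comm, card_inter_add_card_sdiff,
      div_self (by simpa using (hΦ.1 N).card_pos.ne')]
  have hlim := (tendsto_const_nhds (x := (1 : ℝ))).sub (hΦ.2 g)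
  rw [sub_self] at hlim
  exact hlim.congr fun N => (hcompl N).symm

theorem tendsto_zero_of_mem_closure_span {𝕜 E F ι : Type*} [NontriviallyNormedField 𝕜]
    [NormedAddCommGroup E] [NormedSpace 𝕜 E] [NormedAddCommGroup F] [NormedSpace 𝕜 F]
    {l : Filter ι} {A : ι → E →L[𝕜] F} {C : ℝ}
    (hA : ∀ i v, ‖A i v‖ ≤ C * ‖v‖) {S : Set E} (hS : ∀ w ∈ S, Tendsto (A · w) l (𝓝 0))
    {w : E} (hw : w ∈ (Submodule.span 𝕜 S).topologicalClosure) : Tendsto (A · w) l (𝓝 0) := by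
  have hequi : Equicontinuous fun i => ⇑(A i) := by
    have hbounded_iff := (NormedSpace.equicontinuous_TFAE A).out 3 1
    exact hbounded_iff.mp ⟨C, hA⟩
  have hclosed : IsClosed {w | Tendsto (A · w) l (𝓝 0)} :=
    hequi.isClosed_setOfPred_tendsto continuous_const
  refine closure_minimal (fun w hw => ?_) hclosed hw
  induction hw using Submodule.span_induction with
  | mem x hx => exact hS x hx
  | zero => simpa using tendsto_const_nhds
  | add x y _ _ hx hy => simpa using hx.add hy
  | smul c x _ hx => simpa using hx.const_smul c

section FolnerAverage

variable {𝕜 E G : Type*} [RCLike 𝕜] [NormedAddCommGroup E] [NormedSpace 𝕜 E]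

def invariantSubmodule (U : G → E →ₗᵢ[𝕜] E) : Submodule 𝕜 E where
  carrier := {v | ∀ g, U g v = v}
  add_mem' hv hw g := by rw [map_add, hv g, hw g]
  zero_mem' g := map_zero _
  smul_mem' c v hv g := by rw [map_smul, hv g]

theorem isClosed_invariantSubmodule (U : G → E →ₗᵢ[𝕜] E) :
    IsClosed (invariantSubmodule U : Set E) := by
  change IsClosed {v | ∀ g, U g v = v}
  simp only [Set.ofPred_forall]
  exact isClosed_iInter fun g => isClosed_eq (U g).continuous continuous_id

instance [CompleteSpace E] (U : G → E →ₗᵢ[𝕜] E) : CompleteSpace (invariantSubmodule U) :=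
  (isClosed_invariantSubmodule U).completeSpace_coe

def folnerAverage (U : G → E →ₗᵢ[𝕜] E) (s : Finset G) : E →L[𝕜] E :=
  (#s : 𝕜)⁻¹ • ∑ a ∈ s, (U a).toContinuousLinearMap

variable {U : G → E →ₗᵢ[𝕜] E}

theorem folnerAverage_apply (s : Finset G) (v : E) :
    folnerAverage U s v = (#s : 𝕜)⁻¹ • ∑ a ∈ s, U a v := by
  simp [folnerAverage]

theorem norm_sum_linearIsometry_apply_le (s : Finset G) (v : E) :
    ‖∑ a ∈ s, U a v‖ ≤ #s * ‖v‖ := by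
  simpa using norm_sum_le_of_le s fun a _ => ((U a).norm_map v).le

theorem norm_folnerAverage_apply_le (s : Finset G) (v : E) : ‖folnerAverage U s v‖ ≤ ‖v‖ := by
  rw [folnerAverage_apply, norm_smul, norm_inv, RCLike.norm_natCast]
  rcases s.eq_empty_or_nonempty with rfl | hs
  · simp
  · rw [inv_mul_le_iff₀ (by simpa using hs.card_pos)]
    exact norm_sum_linearIsometry_apply_le s v

theorem folnerAverage_apply_of_mem_invariantSubmodule {s : Finset G} (hs : s.Nonempty) {v : E}
    (hv : v ∈ invariantSubmodule U) : folnerAverage U s v = v := by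
  rw [folnerAverage_apply, sum_congr rfl fun a _ => hv a, sum_const, ← Nat.cast_smul_eq_nsmul 𝕜,
    smul_smul, inv_mul_cancel₀ (by simpa using hs.card_pos.ne'), one_smul]

variable [Group G] [DecidableEq G]

theorem norm_folnerAverage_apply_sub_le (hU : ∀ a b v, U a (U b v) = U (b * a) v)
    (g : G) (s : Finset G) (v : E) :
    ‖folnerAverage U s (U g v - v)‖ ≤ 2 * (#(s \ s.image (g * ·)) / #s) * ‖v‖ := by
  set t := s.image (g * ·)
  have hts : #t = #s := card_image_of_injective s (mul_right_injective g)
  have hshift : ∑ a ∈ s, U a (U g v) = ∑ b ∈ t, U b v := by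
    rw [sum_image fun a _ b _ hab => mul_left_cancel hab]
    exact sum_congr rfl fun a _ => hU a g v
  calc ‖folnerAverage U s (U g v - v)‖
      = (#s : ℝ)⁻¹ * ‖∑ b ∈ t \ s, U b v - ∑ a ∈ s \ t, U a v‖ := by
        rw [map_sub, folnerAverage_apply, folnerAverage_apply, ← smul_sub, hshift,
          sum_sdiff_sub_sum_sdiff, norm_smul, norm_inv, RCLike.norm_natCast]
    _ ≤ (#s : ℝ)⁻¹ * (#(t \ s) * ‖v‖ + #(s \ t) * ‖v‖) := by
        gcongr
        exact (norm_sub_le _ _).trans (add_le_add (norm_sum_linearIsometry_apply_le _ v)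
          (norm_sum_linearIsometry_apply_le _ v))
    _ = 2 * (#(s \ t) / #s) * ‖v‖ := by
        rw [card_sdiff_comm hts]
        ring

theorem tendsto_folnerAverage_apply_sub (hU : ∀ a b v, U a (U b v) = U (b * a) v)
    {Φ : ℕ → Finset G} (hΦ : IsLeftFolner Φ) (g : G) (v : E) :
    Tendsto (fun N => folnerAverage U (Φ N) (U g v - v)) atTop (𝓝 0) := by
  refine squeeze_zero_norm (fun N => norm_folnerAverage_apply_sub_le hU g (Φ N) v) ?_
  simpa using ((hΦ.tendsto_card_sdiff_div g).const_mul 2).mul_const ‖v‖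

end FolnerAverage

section InnerProduct

variable {𝕜 E G : Type*} [RCLike 𝕜] [NormedAddCommGroup E] [InnerProductSpace 𝕜 E]

def coboundaries (U : G → E →ₗᵢ[𝕜] E) : Submodule 𝕜 E :=
  Submodule.span 𝕜 {w | ∃ g v, w = U g v - v}

theorem orthogonal_coboundaries_le (U : G → E →ₗᵢ[𝕜] E) :
    (coboundaries U)ᗮ ≤ invariantSubmodule U := by
  intro u hu g
  have horth : inner 𝕜 (U g u - u) u = 0 :=
    (Submodule.mem_orthogonal _ u).1 hu _ (Submodule.subset_span ⟨g, u, rfl⟩)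
  rw [inner_sub_left, sub_eq_zero] at horth
  refine eq_of_norm_le_re_inner_eq_norm_sq (𝕜 := 𝕜) ((U g).norm_map u).le ?_
  rw [horth, inner_self_eq_norm_sq_to_K]
  norm_cast

theorem tendsto_folnerAverage_starProjection [CompleteSpace E] [Group G] [DecidableEq G]
    {U : G → E →ₗᵢ[𝕜] E} (hU : ∀ a b v, U a (U b v) = U (b * a) v)
    {Φ : ℕ → Finset G} (hΦ : IsLeftFolner Φ) (v : E) :
    Tendsto (fun N => folnerAverage U (Φ N) v) atTop
      (𝓝 ((invariantSubmodule U).starProjection v)) := by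
  set M := invariantSubmodule U
  have hperp : v - M.starProjection v ∈ (coboundaries U).topologicalClosure := by
    rw [← Submodule.orthogonal_orthogonal_eq_closure]
    exact Submodule.orthogonal_le (orthogonal_coboundaries_le U)
      (M.sub_starProjection_mem_orthogonal v)
  have hcob : Tendsto (fun N => folnerAverage U (Φ N) (v - M.starProjection v)) atTop (𝓝 0) := by
    refine tendsto_zero_of_mem_closure_span (C := 1) (fun N w => ?_) ?_ hperp
    · simpa using norm_folnerAverage_apply_le (Φ N) w
    · rintro _ ⟨g, w, rfl⟩
      exact tendsto_folnerAverage_apply_sub hU hΦ g w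
  have hfix : ∀ N, folnerAverage U (Φ N) (M.starProjection v) = M.starProjection v :=
    fun N => folnerAverage_apply_of_mem_invariantSubmodule (hΦ.1 N) (M.starProjection_apply_mem v)
  simpa [hfix] using hcob.add_const (M.starProjection v)

end InnerProduct

namespace MeasureTheory

variable {G X : Type*} [MeasurableSpace X] {μ : Measure X} {T : G → X → X}

section Koopman

variable (𝕜 : Type*) [RCLike 𝕜] {E : Type*} [NormedAddCommGroup E] [NormedSpace 𝕜 E]
  {p : ℝ≥0∞} [Fact (1 ≤ p)]

def koopman (hT : ∀ g, MeasurePreserving (T g) μ μ) (g : G) : Lp E p μ →ₗᵢ[𝕜] Lp E p μ :=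
  Lp.compMeasurePreservingₗᵢ 𝕜 (T g) (hT g)

variable {𝕜} (hT : ∀ g, MeasurePreserving (T g) μ μ)

theorem coeFn_koopman (g : G) (v : Lp E p μ) : ⇑(koopman 𝕜 hT g v) =ᵐ[μ] ⇑v ∘ T g :=
  Lp.coeFn_compMeasurePreserving v (hT g)

theorem koopman_apply_koopman [Mul G] (hT_hom : ∀ g h, T (g * h) = T g ∘ T h) (g h : G)
    (v : Lp E p μ) : koopman 𝕜 hT g (koopman 𝕜 hT h v) = koopman 𝕜 hT (h * g) v := by
  refine Lp.ext ?_
  calc ⇑(koopman 𝕜 hT g (koopman 𝕜 hT h v))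
      =ᵐ[μ] ⇑(koopman 𝕜 hT h v) ∘ T g := coeFn_koopman hT g _
    _ =ᵐ[μ] (⇑v ∘ T h) ∘ T g := (hT g).quasiMeasurePreserving.ae_eq_comp (coeFn_koopman hT h v)
    _ = ⇑v ∘ T (h * g) := by rw [hT_hom]; rfl
    _ =ᵐ[μ] ⇑(koopman 𝕜 hT (h * g) v) := (coeFn_koopman hT (h * g) v).symm

theorem mem_invariantSubmodule_koopman_iff {v : Lp E p μ} :
    v ∈ invariantSubmodule (koopman 𝕜 hT) ↔ ∀ g, ⇑v ∘ T g =ᵐ[μ] v :=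
  forall_congr' fun g => ⟨fun hv => (coeFn_koopman hT g v).symm.trans (by rw [hv]),
    fun hv => Lp.ext ((coeFn_koopman hT g v).trans hv)⟩

theorem MemLp.toLp_mem_invariantSubmodule_koopman_iff {f : X → E} (hf : MemLp f p μ) :
    hf.toLp f ∈ invariantSubmodule (koopman 𝕜 hT) ↔ ∀ g, f ∘ T g =ᵐ[μ] f := by
  refine (mem_invariantSubmodule_koopman_iff hT).trans (forall_congr' fun g => ?_)
  have hcomp := (hT g).quasiMeasurePreserving.ae_eq_comp hf.coeFn_toLp
  exact ⟨fun h => hcomp.symm.trans (h.trans hf.coeFn_toLp),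
    fun h => hcomp.trans (h.trans hf.coeFn_toLp.symm)⟩

theorem MemLp.coeFn_folnerAverage_koopman_toLp {f : X → E} (hf : MemLp f p μ) (s : Finset G) :
    ⇑(folnerAverage (koopman 𝕜 hT) s (hf.toLp f)) =ᵐ[μ]
      fun x => (#s : 𝕜)⁻¹ • ∑ g ∈ s, f (T g x) := by
  have hterms : ∀ g ∈ s, ⇑(koopman 𝕜 hT g (hf.toLp f)) =ᵐ[μ] f ∘ T g := fun g _ =>
    (coeFn_koopman hT g _).trans ((hT g).quasiMeasurePreserving.ae_eq_comp hf.coeFn_toLp)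
  rw [folnerAverage_apply]
  filter_upwards [Lp.coeFn_smul (#s : 𝕜)⁻¹ (∑ g ∈ s, koopman 𝕜 hT g (hf.toLp f)),
    Lp.coeFn_fun_finsetSum s fun g => koopman 𝕜 hT g (hf.toLp f),
    (eventually_all_finset s).2 hterms] with x hsmul hsum hterm
  rw [hsmul, Pi.smul_apply, hsum]
  exact congrArg _ (sum_congr rfl hterm)

end Koopman

theorem integral_mul_eq_inner_toLp {f h : X → ℝ} (hf : MemLp f 2 μ) (hh : MemLp h 2 μ) :
    ∫ x, f x * h x ∂μ = inner ℝ (hf.toLp f) (hh.toLp h) := by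
  rw [L2.inner_def]
  refine integral_congr_ae ?_
  filter_upwards [hf.coeFn_toLp, hh.coeFn_toLp] with x hfx hhx
  simp [hfx, hhx, mul_comm]

end MeasureTheory

theorem mean_ergodic_theorem_amenable_general
    {G X : Type*} [Group G] [DecidableEq G]
    [MeasurableSpace X] (μ : Measure X)
    (T : G → X → X)
    (hT_mp : ∀ g, MeasurePreserving (T g) μ μ)
    (hT_hom : ∀ g h, T (g * h) = T g ∘ T h)
    (Φ : ℕ → Finset G) (hΦ : IsLeftFolner Φ)
    (f : X → ℝ) (hf : MemLp f 2 μ) :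
    ∃ Pf : X → ℝ, MemLp Pf 2 μ ∧
      -- `Pf` lies in the subspace of `T`-invariant functions
      (∀ g : G, (fun x => Pf (T g x)) =ᵐ[μ] Pf) ∧
      -- `f - Pf` is orthogonal to every `T`-invariant function, so `Pf` is the orthogonal
      -- projection of `f` onto that closed subspace
      (∀ h : X → ℝ, MemLp h 2 μ → (∀ g : G, (fun x => h (T g x)) =ᵐ[μ] h) →
        ∫ x, (f x - Pf x) * h x ∂μ = 0) ∧
      Tendsto (fun N =>
        eLpNorm (fun x => ((((Φ N).card : ℝ))⁻¹ * ∑ g ∈ Φ N, f (T g x)) - Pf x) 2 μ)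
        atTop (𝓝 0) := by
  let U : G → Lp ℝ 2 μ →ₗᵢ[ℝ] Lp ℝ 2 μ := koopman ℝ hT_mp
  set M := invariantSubmodule U
  set Pf := M.starProjection (hf.toLp f)
  have hPf : Pf ∈ M := M.starProjection_apply_mem _
  refine ⟨Pf, Lp.memLp Pf, (mem_invariantSubmodule_koopman_iff hT_mp).1 hPf, ?_, ?_⟩
  · intro h hh hinv
    have hhM : hh.toLp h ∈ M := (hh.toLp_mem_invariantSubmodule_koopman_iff hT_mp).2 hinv
    calc ∫ x, (f x - Pf x) * h x ∂μ
        = inner ℝ ((hf.sub (Lp.memLp Pf)).toLp (f - ⇑Pf)) (hh.toLp h) :=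
          integral_mul_eq_inner_toLp (hf.sub (Lp.memLp Pf)) hh
      _ = 0 := by
          rw [MemLp.toLp_sub hf (Lp.memLp Pf), Lp.toLp_coeFn]
          exact M.starProjection_inner_eq_zero _ _ hhM
  · have hconv := tendsto_folnerAverage_starProjection (U := U)
      (koopman_apply_koopman hT_mp hT_hom) hΦ (hf.toLp f)
    refine ((Lp.tendsto_Lp_iff_tendsto_eLpNorm' _ _).1 hconv).congr fun N => eLpNorm_congr_ae ?_
    filter_upwards [hf.coeFn_folnerAverage_koopman_toLp (𝕜 := ℝ) hT_mp (Φ N)] with x hx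
    rw [Pi.sub_apply, hx, smul_eq_mul]

/-- Mean ergodic theorem for amenable groups. For `f ∈ L²(μ)` the averages
`(1/|Φ_N|) Σ_{g ∈ Φ_N} f ∘ T_g` converge in `L²(μ)` to the orthogonal projection `Pf` of `f`
onto the closed subspace of `T`-invariant functions. -/
theorem mean_ergodic_theorem_amenable
    {G X : Type*} [Group G] [Countable G] [DecidableEq G]
    [MeasurableSpace X] (μ : Measure X) [IsProbabilityMeasure μ]
    (T : G → X → X)
    (hT_mp : ∀ g, MeasurePreserving (T g) μ μ)
    (hT_bij : ∀ g, Function.Bijective (T g))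
    (hT_hom : ∀ g h, T (g * h) = T g ∘ T h)
    (Φ : ℕ → Finset G) (hΦ : IsLeftFolner Φ)
    (f : X → ℝ) (hf : MemLp f 2 μ) :
    ∃ Pf : X → ℝ, MemLp Pf 2 μ ∧
      -- `Pf` lies in the subspace of `T`-invariant functions
      (∀ g : G, (fun x => Pf (T g x)) =ᵐ[μ] Pf) ∧
      -- `f - Pf` is orthogonal to every `T`-invariant function, so `Pf` is the orthogonal
      -- projection of `f` onto that closed subspace
      (∀ h : X → ℝ, MemLp h 2 μ → (∀ g : G, (fun x => h (T g x)) =ᵐ[μ] h) →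
        ∫ x, (f x - Pf x) * h x ∂μ = 0) ∧
      Tendsto (fun N =>
        eLpNorm (fun x => ((((Φ N).card : ℝ))⁻¹ * ∑ g ∈ Φ N, f (T g x)) - Pf x) 2 μ)
        atTop (𝓝 0) :=
  mean_ergodic_theorem_amenable_general μ T hT_mp hT_hom Φ hΦ f hf
end

section
/- Let G be a countable group, let ℋ be a Hilbert space, and let (x_g)_{g ∈ G} be a family of vectors in ℋ with ‖x_g‖ ≤ 1 for all g. Let c > 0, let F ⊆ G be a finite nonempty set, and let Φ ⊆ G be a finite nonempty set such that |Φ △ gΦ| < c|Φ| for all g ∈ F. Then ‖(1/|Φ|) Σ_{g ∈ Φ} x_g − (1/|F|) Σ_{h ∈ F} (1/|Φ|) Σ_{g ∈ Φ} x_{hg}‖ < 2c. -/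
/-!
Summing over `hΦ` instead of `Φ` changes the sum of `x` only on `Φ △ hΦ`, so with `‖x‖ ≤ 1`
the averages of `x` over `Φ` and over `hΦ` differ by at most `|Φ △ hΦ| / |Φ| < c`; averaging
over `h ∈ F` keeps the difference below `c`.
-/

open Finset
open scoped symmDiff

section SumSymmDiff

variable {α E : Type*} [DecidableEq α] [SeminormedAddCommGroup E]

theorem norm_sum_sub_sum_le_sum_symmDiff (f : α → E) (s t : Finset α) :
    ‖∑ a ∈ s, f a - ∑ a ∈ t, f a‖ ≤ ∑ a ∈ s ∆ t, ‖f a‖ := by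
  rw [← sum_sdiff_sub_sum_sdiff, symmDiff_def, sup_eq_union, sum_union disjoint_sdiff_sdiff]
  exact (norm_sub_le _ _).trans (add_le_add (norm_sum_le _ _) (norm_sum_le _ _))

theorem norm_sum_sub_sum_le_card_symmDiff_mul {f : α → E} {M : ℝ} {s t : Finset α}
    (hf : ∀ a ∈ s ∆ t, ‖f a‖ ≤ M) :
    ‖∑ a ∈ s, f a - ∑ a ∈ t, f a‖ ≤ #(s ∆ t) * M :=
  (norm_sum_sub_sum_le_sum_symmDiff f s t).trans (by simpa using sum_le_card_nsmul _ _ _ hf)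

end SumSymmDiff

theorem norm_sub_average_lt {ι E : Type*} [SeminormedAddCommGroup E] [NormedSpace ℝ E]
    {a : E} {b : ι → E} {c : ℝ} {F : Finset ι} (hF : F.Nonempty)
    (h : ∀ i ∈ F, ‖a - b i‖ < c) :
    ‖a - (#F : ℝ)⁻¹ • ∑ i ∈ F, b i‖ < c := by
  have hF₀ : (0 : ℝ) < #F := by exact_mod_cast hF.card_pos
  have hsub : a - (#F : ℝ)⁻¹ • ∑ i ∈ F, b i = (#F : ℝ)⁻¹ • ∑ i ∈ F, (a - b i) := by
    rw [sum_sub_distrib, smul_sub, sum_const, ← Nat.cast_smul_eq_nsmul ℝ, smul_smul,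
      inv_mul_cancel₀ hF₀.ne', one_smul]
  calc ‖a - (#F : ℝ)⁻¹ • ∑ i ∈ F, b i‖
      ≤ (#F : ℝ)⁻¹ * ∑ i ∈ F, ‖a - b i‖ := by
        rw [hsub, norm_smul, Real.norm_of_nonneg (by positivity)]
        gcongr
        exact norm_sum_le _ _
    _ < (#F : ℝ)⁻¹ * ∑ _i ∈ F, c := by gcongr with i hi; exact h i hi
    _ = c := by rw [sum_const, nsmul_eq_mul, inv_mul_cancel_left₀ hF₀.ne']

theorem norm_average_sub_average_translate_le {G E : Type*} [Group G] [DecidableEq G]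
    [SeminormedAddCommGroup E] [NormedSpace ℝ E] {x : G → E} (hx : ∀ g, ‖x g‖ ≤ 1)
    (Φ : Finset G) (h : G) :
    ‖(#Φ : ℝ)⁻¹ • ∑ g ∈ Φ, x g - (#Φ : ℝ)⁻¹ • ∑ g ∈ Φ, x (h * g)‖
      ≤ (#Φ : ℝ)⁻¹ * #(Φ ∆ Φ.image (h * ·)) := by
  rw [← smul_sub, norm_smul, Real.norm_of_nonneg (by positivity),
    ← sum_image (f := x) (g := (h * ·)) fun _ _ _ _ ↦ mul_left_cancel]
  gcongr
  simpa using norm_sum_sub_sum_le_card_symmDiff_mul fun g _ ↦ hx g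

theorem vanDerCorput_folner_observation_general
    {G : Type*} [Group G] [DecidableEq G]
    {H : Type*} [NormedAddCommGroup H] [InnerProductSpace ℝ H]
    (x : G → H) (hx : ∀ g, ‖x g‖ ≤ 1)
    (c : ℝ) (hc : 0 < c)
    (F : Finset G) (hF : F.Nonempty)
    (Φ : Finset G) (hΦ : Φ.Nonempty)
    (h : ∀ g ∈ F, ((symmDiff Φ (Φ.image (fun y => g * y))).card : ℝ) < c * Φ.card) :
    ‖((Φ.card : ℝ)⁻¹ • ∑ g ∈ Φ, x g) -
      (F.card : ℝ)⁻¹ • ∑ h ∈ F, (Φ.card : ℝ)⁻¹ • ∑ g ∈ Φ, x (h * g)‖ < 2 * c := by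
  have hΦ₀ : (0 : ℝ) < #Φ := by exact_mod_cast hΦ.card_pos
  refine lt_trans (norm_sub_average_lt hF fun k hk ↦ ?_) (by linarith)
  calc _ ≤ (#Φ : ℝ)⁻¹ * #(Φ ∆ Φ.image (k * ·)) := norm_average_sub_average_translate_le hx Φ k
    _ < (#Φ : ℝ)⁻¹ * (c * #Φ) := by gcongr; exact h k hk
    _ = c := by field_simp

/-- van der Corput-type observation. If `‖x_g‖ ≤ 1` for all `g`, `F` is a
finite nonempty set, and `Φ` is a finite nonempty set with `|Φ △ gΦ| < c|Φ|` for all `g ∈ F`,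
then the average of `x` over `Φ` differs from the average over `h ∈ F` of the averages of
`g ↦ x (h * g)` over `Φ` by less than `2c`. -/
theorem vanDerCorput_folner_observation
    {G : Type*} [Group G] [Countable G] [DecidableEq G]
    {H : Type*} [NormedAddCommGroup H] [InnerProductSpace ℝ H] [CompleteSpace H]
    (x : G → H) (hx : ∀ g, ‖x g‖ ≤ 1)
    (c : ℝ) (hc : 0 < c)
    (F : Finset G) (hF : F.Nonempty)
    (Φ : Finset G) (hΦ : Φ.Nonempty)
    (h : ∀ g ∈ F, ((symmDiff Φ (Φ.image (fun y => g * y))).card : ℝ) < c * Φ.card) :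
    ‖((Φ.card : ℝ)⁻¹ • ∑ g ∈ Φ, x g) -
      (F.card : ℝ)⁻¹ • ∑ h ∈ F, (Φ.card : ℝ)⁻¹ • ∑ g ∈ Φ, x (h * g)‖ < 2 * c :=
  vanDerCorput_folner_observation_general x hx c hc F hF Φ hΦ h
end

section
/- Let G be a countable amenable group, d ∈ ℕ, and let (u_g)_{g ∈ Gᵈ} be a bounded family of real numbers indexed by Gᵈ. Suppose there are real numbers J and J′ such that for every choice of two-sided Følner sequences Φ⁽¹⁾, …, Φ⁽ᵈ⁾ in G: (i) the box averages (1/(|Φ⁽¹⁾_N| ⋯ |Φ⁽ᵈ⁾_N|)) Σ_{g ∈ Φ⁽¹⁾_N × ⋯ × Φ⁽ᵈ⁾_N} u_g converge to J as N → ∞, and (ii) the iterated limits lim_{N₁→∞} (1/|Φ⁽¹⁾_{N₁}|) Σ_{g₁ ∈ Φ⁽¹⁾_{N₁}} ⋯ lim_{N_d→∞} (1/|Φ⁽ᵈ⁾_{N_d}|) Σ_{g_d ∈ Φ⁽ᵈ⁾_{N_d}} u_{(g₁, …, g_d)} exist and equal J′. Then J = J′. -/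
/-!
Fix one two-sided Følner sequence `Φ` and use it in every coordinate. Unwinding the iterated
limit one coordinate at a time yields, for every `ε > 0` and `K`, indices `M ≥ K` at which the
box average over `Φ` is `ε`-close to `J'`. Along a diagonal sequence of such indices, the sets
`Φ (M n i)` form new two-sided Følner sequences, whose box averages tend to `J` by hypothesis;
hence `J = J'`.
-/

open MeasureTheory Filter Topology

/-- The box average `(1/(|Φ⁽¹⁾_{N₁}| ⋯ |Φ⁽ᵈ⁾_{N_d}|)) Σ_{g ∈ Φ⁽¹⁾_{N₁} × ⋯ × Φ⁽ᵈ⁾_{N_d}} u g`. -/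
noncomputable def boxAvg {G : Type*} {d : ℕ} (u : (Fin d → G) → ℝ)
    (Φ : Fin d → ℕ → Finset G) (N : Fin d → ℕ) : ℝ :=
  (∏ i, ((Φ i (N i)).card : ℝ))⁻¹ * ∑ g ∈ Fintype.piFinset (fun i => Φ i (N i)), u g

/-- `NestedLim Φ u J'` expresses that the iterated limit
`lim_{N₁→∞} (1/|Φ⁽¹⁾_{N₁}|) Σ_{g₁ ∈ Φ⁽¹⁾_{N₁}} ⋯ lim_{N_d→∞} (1/|Φ⁽ᵈ⁾_{N_d}|) Σ_{g_d ∈ Φ⁽ᵈ⁾_{N_d}} u (g₁, …, g_d)`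
exists and equals `J'`: each inner iterated limit exists (for each value of the outer
variables) and the outer averaged limits exist. -/
def NestedLim {G : Type*} : ∀ {d : ℕ}, (Fin d → ℕ → Finset G) → ((Fin d → G) → ℝ) → ℝ → Prop
  | 0, _, u, J => u (fun i => i.elim0) = J
  | _ + 1, Φ, u, J => ∃ v : G → ℝ,
      (∀ g : G, NestedLim (fun i => Φ i.succ) (fun w => u (Fin.cons g w)) (v g)) ∧
      Filter.Tendsto (fun N => (((Φ 0 N).card : ℝ))⁻¹ * ∑ g ∈ Φ 0 N, v g)
        Filter.atTop (nhds J)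

open Finset

lemma Finset.sum_piFinset_succ {G M : Type*} [AddCommMonoid M] {d : ℕ}
    (s : Fin (d + 1) → Finset G) (F : (Fin (d + 1) → G) → M) :
    ∑ f ∈ Fintype.piFinset s, F f =
      ∑ g ∈ s 0, ∑ w ∈ Fintype.piFinset (fun i => s i.succ), F (Fin.cons g w) := by
  have h := filter_piFinset_eq_map_consEquiv s (fun _ => True)
  simp only [filter_true] at h
  rw [h, sum_map, sum_product]
  rfl

lemma abs_inv_card_mul_sum_sub_le {α : Type*} {s : Finset α} {f h : α → ℝ} {ε : ℝ}
    (hε : 0 ≤ ε) (hfh : ∀ g ∈ s, |f g - h g| ≤ ε) :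
    |(#s : ℝ)⁻¹ * ∑ g ∈ s, f g - (#s : ℝ)⁻¹ * ∑ g ∈ s, h g| ≤ ε := by
  rw [← mul_sub, ← sum_sub_distrib, abs_mul, abs_inv, Nat.abs_cast]
  refine inv_mul_le_of_le_mul₀ (Nat.cast_nonneg _) hε ?_
  calc |∑ g ∈ s, (f g - h g)| ≤ ∑ g ∈ s, |f g - h g| := abs_sum_le_sum_abs _ _
    _ ≤ #s * ε := by simpa using sum_le_card_nsmul s _ ε hfh

section boxAvg

variable {G : Type*}

lemma boxAvg_zero (u : (Fin 0 → G) → ℝ) (Φ : Fin 0 → ℕ → Finset G) (N : Fin 0 → ℕ) :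
    boxAvg u Φ N = u (fun i => i.elim0) := by
  simp [boxAvg, Fintype.piFinset_of_isEmpty, Subsingleton.elim _ (fun i : Fin 0 => i.elim0)]

lemma boxAvg_succ {d : ℕ} (u : (Fin (d + 1) → G) → ℝ) (Φ : Fin (d + 1) → ℕ → Finset G)
    (N : Fin (d + 1) → ℕ) :
    boxAvg u Φ N = (#(Φ 0 (N 0)) : ℝ)⁻¹ * ∑ g ∈ Φ 0 (N 0),
      boxAvg (fun w => u (Fin.cons g w)) (fun i => Φ i.succ) (fun i => N i.succ) := by
  simp only [boxAvg, Fin.prod_univ_succ, sum_piFinset_succ, ← mul_sum, mul_inv]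
  ring

end boxAvg

section Folner

variable {G : Type*} [Group G] [DecidableEq G] {Φ : ℕ → Finset G} {m : ℕ → ℕ}

lemma IsLeftFolner.comp_tendsto (hΦ : IsLeftFolner Φ) (hm : Tendsto m atTop atTop) :
    IsLeftFolner (Φ ∘ m) :=
  ⟨fun N => hΦ.1 (m N), fun g => (hΦ.2 g).comp hm⟩

lemma IsRightFolner.comp_tendsto (hΦ : IsRightFolner Φ) (hm : Tendsto m atTop atTop) :
    IsRightFolner (Φ ∘ m) :=
  ⟨fun N => hΦ.1 (m N), fun g => (hΦ.2 g).comp hm⟩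

lemma IsTwoSidedFolner.comp_tendsto (hΦ : IsTwoSidedFolner Φ) (hm : Tendsto m atTop atTop) :
    IsTwoSidedFolner (Φ ∘ m) :=
  ⟨hΦ.1.comp_tendsto hm, hΦ.2.comp_tendsto hm⟩

end Folner

namespace NestedLim

universe u

/-- Uniformity over a finite family `ι` of outer variables is what lets the induction on `d`
go through: after fixing the first coordinate, its finitely many values join the family. -/
theorem exists_forall_abs_boxAvg_sub_lt {G ι : Type u} [Finite ι] {d : ℕ}
    {Φ : Fin d → ℕ → Finset G} {u : ι → (Fin d → G) → ℝ} {J : ι → ℝ}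
    (h : ∀ a, NestedLim Φ (u a) (J a)) {ε : ℝ} (hε : 0 < ε) (K : ℕ) :
    ∃ M : Fin d → ℕ, (∀ i, K ≤ M i) ∧ ∀ a, |boxAvg (u a) Φ M - J a| < ε := by
  induction d generalizing ι ε with
  | zero =>
    refine ⟨fun _ => K, fun _ => le_rfl, fun a => ?_⟩
    rwa [boxAvg_zero, h a, sub_self, abs_zero]
  | succ d ih =>
    choose v hv_inner hv_lim using h
    have hclose : ∀ᶠ N in atTop,
        ∀ a, |(#(Φ 0 N) : ℝ)⁻¹ * ∑ g ∈ Φ 0 N, v a g - J a| < ε / 2 :=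
      eventually_all.2 fun a => by
        simpa only [Real.dist_eq] using Metric.tendsto_nhds.1 (hv_lim a) _ (half_pos hε)
    obtain ⟨N₀, hN₀, hKN₀⟩ := (hclose.and (eventually_ge_atTop K)).exists
    obtain ⟨M, hKM, hM⟩ := ih (ι := ι × Φ 0 N₀) (u := fun p w => u p.1 (Fin.cons p.2 w))
      (J := fun p => v p.1 p.2) (fun p => hv_inner p.1 p.2) (half_pos hε)
    refine ⟨Fin.cons N₀ M, Fin.cases hKN₀ hKM, fun a => ?_⟩
    rw [boxAvg_succ]
    simp only [Fin.cons_zero, Fin.cons_succ]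
    calc _ ≤ _ + _ := abs_sub_le _ ((#(Φ 0 N₀) : ℝ)⁻¹ * ∑ g ∈ Φ 0 N₀, v a g) _
      _ < ε / 2 + ε / 2 := add_lt_add_of_le_of_lt
          (abs_inv_card_mul_sum_sub_le (half_pos hε).le fun g hg => (hM (a, ⟨g, hg⟩)).le)
          (hN₀ a)
      _ = ε := add_halves ε

theorem exists_tendsto_boxAvg {G : Type u} {d : ℕ} {Φ : Fin d → ℕ → Finset G}
    {u : (Fin d → G) → ℝ} {J : ℝ} (h : NestedLim Φ u J) :
    ∃ M : ℕ → Fin d → ℕ, (∀ i, Tendsto (fun n => M n i) atTop atTop) ∧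
      Tendsto (fun n => boxAvg u Φ (M n)) atTop (𝓝 J) := by
  have hnear (n : ℕ) := exists_forall_abs_boxAvg_sub_lt (ι := PUnit) (u := fun _ => u)
    (J := fun _ => J) (fun _ => h) (Nat.one_div_pos_of_nat (n := n)) n
  choose M hnM hM using hnear
  refine ⟨M, fun i => tendsto_atTop_mono (fun n => hnM n i) tendsto_id, ?_⟩
  rw [tendsto_iff_dist_tendsto_zero]
  exact squeeze_zero (fun _ => dist_nonneg) (fun n => (hM n PUnit.unit).le)
    tendsto_one_div_add_atTop_nhds_zero_nat

end NestedLim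

theorem box_limit_eq_iterated_limit_general
    {G : Type*} [Group G] [DecidableEq G]
    (hG : ∃ Φ : ℕ → Finset G, IsTwoSidedFolner Φ)
    (d : ℕ) (u : (Fin d → G) → ℝ)
    (J J' : ℝ)
    (hbox : ∀ Φ : Fin d → ℕ → Finset G, (∀ i, IsTwoSidedFolner (Φ i)) →
      Tendsto (fun N => boxAvg u Φ (fun _ => N)) atTop (𝓝 J))
    (hiter : ∀ Φ : Fin d → ℕ → Finset G, (∀ i, IsTwoSidedFolner (Φ i)) →
      NestedLim Φ u J') :
    J = J' := by
  obtain ⟨Φ, hΦ⟩ := hG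
  obtain ⟨M, hM, hlim⟩ := (hiter (fun _ => Φ) fun _ => hΦ).exists_tendsto_boxAvg
  have hdiag : ∀ i, IsTwoSidedFolner (fun n => Φ (M n i)) := fun i => hΦ.comp_tendsto (hM i)
  exact tendsto_nhds_unique (hbox _ hdiag) hlim

/-- If, for every choice of two-sided Følner sequences, the box averages of
a bounded family `u` converge to `J` and the iterated limits exist and equal `J'`, then
`J = J'`. -/
theorem box_limit_eq_iterated_limit
    {G : Type*} [Group G] [Countable G] [DecidableEq G]
    (hG : ∃ Φ : ℕ → Finset G, IsTwoSidedFolner Φ)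
    (d : ℕ) (u : (Fin d → G) → ℝ) (hu : ∃ C, ∀ g, |u g| ≤ C)
    (J J' : ℝ)
    (hbox : ∀ Φ : Fin d → ℕ → Finset G, (∀ i, IsTwoSidedFolner (Φ i)) →
      Tendsto (fun N => boxAvg u Φ (fun _ => N)) atTop (𝓝 J))
    (hiter : ∀ Φ : Fin d → ℕ → Finset G, (∀ i, IsTwoSidedFolner (Φ i)) →
      NestedLim Φ u J') :
    J = J' :=
  box_limit_eq_iterated_limit_general hG d u J J' hbox hiter
end

section
/- Let (X, 𝒳, μ) be a probability space and let T : X → X be an invertible measurable transformation which preserves μ. Then for every B ∈ 𝒳 and every c > 0, the set {(n, m) ∈ ℤ² : μ(B ∩ T^{−n}B ∩ T^{−m}(B ∩ T^{−n}B)) > μ(B)⁴ − c} meets every sufficiently large square in ℤ²; that is, there exists M₀ ∈ ℕ such that for all M ≥ M₀ and all N₁, N₂ ∈ ℤ, the set intersects [N₁, N₁+M] × [N₂, N₂+M]. -/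
/-
Let `U` be the Koopman operator of `T` on `L²(μ)`, `P` the orthogonal projection onto the
`U`-invariant functions and `A_M = (M + 1)⁻¹ ∑_{k ≤ M} U^k`, so that `A_M v → P v` (von Neumann).
With `g n = 1_{B ∩ T^{-n} B}`, the measure in the statement is `θ n m = ⟪g n, U^m g n⟫`, and
`θ n m = θ m n`. Averaging `θ n m` over `m` in a window `[N₂, N₂ + M]` gives
`⟪g n, U^{N₂} A_M g n⟫ ≥ ‖P g n‖² - ‖A_M g n - P g n‖`, and
`‖P g n‖² ≥ ⟪g n, 1⟫² = μ(B ∩ T^{-n} B)²`, whose averages over any window are eventually at least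
`(‖P 1_B‖²)² - ε ≥ μ(B)⁴ - ε` by the same estimate and Cauchy–Schwarz.

The difficulty is that `‖A_M g n - P g n‖` must be small on average over `n` in a window
`[N₁, N₁ + M]`, uniformly in `N₁`. Expanding `‖A_M g n‖²` and using the symmetry of `θ`, that
average becomes an average of `⟪g d, U^{N₁} A_M g d⟫` over the differences `d` of `[0, M]`, which is
squeezed between `a_M ± √(w_M - a_M)` where `a_M` and `w_M` are the difference averages of
`‖P g d‖²` and `‖A_M g d‖²`. Both converge to `inf a`: `‖A_M v‖²` is almost decreasing in `M`
because Birkhoff sums are subadditive in norm.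
-/

open Filter Finset
open scoped BigOperators InnerProductSpace Topology

theorem tendsto_iInf_and_tendsto_diag_of_symmetric {w : ℕ → ℕ → ℝ} {a : ℕ → ℝ} (C : ℝ)
    (ha : BddBelow (Set.range a)) (hsymm : ∀ m n, w m n = w n m)
    (hrow : ∀ m, Tendsto (w m) atTop (𝓝 (a m))) (hle : ∀ m n, a m ≤ w m n)
    (hblock : ∀ l m n, l ≤ n → w m n ≤ w m l + C * (l + 1) / (n + 1)) :
    Tendsto a atTop (𝓝 (⨅ n, a n)) ∧ Tendsto (fun n ↦ w n n) atTop (𝓝 (⨅ n, a n)) := by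
  have hdecay (l : ℕ) : Tendsto (fun n : ℕ ↦ C * (l + 1) / ((n : ℝ) + 1)) atTop (𝓝 0) := by
    simpa [Function.comp_def] using
      (tendsto_const_div_atTop_nhds_zero_nat (C * (l + 1))).comp (tendsto_add_atTop_nat 1)
  have hupper {u : ℕ → ℝ} (hu : ∀ l, ∃ v : ℕ → ℝ, Tendsto v atTop (𝓝 (a l)) ∧
      ∀ᶠ n in atTop, u n ≤ v n) (b : ℝ) (hb : ⨅ n, a n < b) : ∀ᶠ n in atTop, u n < b := by
    obtain ⟨l, hl⟩ := exists_lt_of_ciInf_lt hb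
    obtain ⟨v, hv, huv⟩ := hu l
    filter_upwards [huv, hv.eventually (gt_mem_nhds hl)] with n h₁ h₂ using h₁.trans_lt h₂
  have ha_le (l n : ℕ) (hln : l ≤ n) : a n ≤ a l + C * (l + 1) / (n + 1) := by
    refine le_of_tendsto_of_tendsto (hrow n) ((hrow l).add_const _) (.of_forall fun m ↦ ?_)
    simpa only [hsymm m] using hblock l m n hln
  constructor
  · refine tendsto_order.2 ⟨fun b hb ↦ .of_forall fun n ↦ hb.trans_le (ciInf_le ha n),
      hupper fun l ↦ ⟨_, by simpa using tendsto_const_nhds.add (hdecay l),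
        eventually_atTop.2 ⟨l, ha_le l⟩⟩⟩
  · refine tendsto_order.2 ⟨fun b hb ↦ .of_forall fun n ↦
      hb.trans_le ((ciInf_le ha n).trans (hle n n)), hupper fun l ↦ ⟨_, ?_,
        eventually_atTop.2 ⟨l, fun n hln ↦ (hblock l n n hln).trans_eq (by rw [hsymm])⟩⟩⟩
    simpa using (hrow l).add (hdecay l)

theorem sq_expect_le_expect_sq {ι : Type*} (s : Finset ι) (f : ι → ℝ) :
    (𝔼 i ∈ s, f i) ^ 2 ≤ 𝔼 i ∈ s, f i ^ 2 := by
  have h := expect_mul_sq_le_sq_mul_sq s f fun _ ↦ 1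
  simp only [mul_one, one_pow] at h
  refine h.trans (mul_le_of_le_one_right (expect_nonneg fun i _ ↦ sq_nonneg _) ?_)
  rcases s.eq_empty_or_nonempty with rfl | hs
  · simp
  · simp [hs]

theorem expect_le_sqrt_expect_sq {ι : Type*} (s : Finset ι) (f : ι → ℝ) :
    𝔼 i ∈ s, f i ≤ √(𝔼 i ∈ s, f i ^ 2) :=
  Real.le_sqrt_of_sq_le (sq_expect_le_expect_sq s f)

theorem tendsto_finsetExpect {ι α : Type*} {l : Filter α} {f : ι → α → ℝ} {a : ι → ℝ}
    (s : Finset ι) (h : ∀ i ∈ s, Tendsto (f i) l (𝓝 (a i))) :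
    Tendsto (fun x ↦ 𝔼 i ∈ s, f i x) l (𝓝 (𝔼 i ∈ s, a i)) := by
  simpa only [expect_eq_sum_div_card] using (tendsto_finsetSum s h).div_const _

theorem exists_mem_Icc_lt_of_lt_expect_expect {F : ℤ → ℤ → ℝ} {b : ℝ} {N₁ N₂ : ℤ} {M : ℕ}
    (h : b < 𝔼 j ∈ range (M + 1), 𝔼 i ∈ range (M + 1), F (N₁ + j) (N₂ + i)) :
    ∃ n ∈ Set.Icc N₁ (N₁ + M), ∃ m ∈ Set.Icc N₂ (N₂ + M), b < F n m := by
  obtain ⟨j, hj, h⟩ := exists_lt_of_lt_expect nonempty_range_add_one h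
  obtain ⟨i, hi, h⟩ := exists_lt_of_lt_expect nonempty_range_add_one h
  rw [mem_range] at hi hj
  exact ⟨N₁ + j, ⟨by omega, by omega⟩, N₂ + i, ⟨by omega, by omega⟩, h⟩

noncomputable def diffAverage (n : ℕ) (F : ℤ → ℝ) : ℝ :=
  𝔼 p ∈ range n ×ˢ range n, F ((p.1 : ℤ) - p.2)

theorem diffAverage_eq_expect_expect (n : ℕ) (F : ℤ → ℝ) :
    diffAverage n F = 𝔼 k ∈ range n, 𝔼 l ∈ range n, F ((k : ℤ) - l) :=
  expect_product' _ _ fun k l : ℕ ↦ F (k - l)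

namespace LinearIsometryEquiv

variable {H : Type*} [NormedAddCommGroup H] [InnerProductSpace ℝ H] (W : H ≃ₗᵢ[ℝ] H) {g : ℤ → H}

theorem coe_pow (k : ℕ) : ⇑(W ^ k) = (⇑W)^[k] :=
  hom_coe_pow _ rfl (fun _ _ ↦ rfl) _ _

theorem birkhoffAverage_eq_smul_sum (n : ℕ) (v : H) :
    birkhoffAverage ℝ W id n v = (n : ℝ)⁻¹ • ∑ k ∈ range n, (W ^ k) v := by
  simp [birkhoffAverage, birkhoffSum, coe_pow]

theorem zpow_apply_zpow (a b : ℤ) (v : H) : (W ^ a) ((W ^ b) v) = (W ^ (a + b)) v := by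
  rw [zpow_add]; rfl

theorem inner_zpow_zpow (a b : ℤ) (u v : H) :
    ⟪(W ^ a) u, (W ^ b) v⟫_ℝ = ⟪u, (W ^ (b - a)) v⟫_ℝ := by
  rw [← (W ^ a).inner_map_map u, zpow_apply_zpow, add_sub_cancel]

theorem inner_zpow_birkhoffAverage (u v : H) (N : ℤ) (n : ℕ) :
    ⟪u, (W ^ N) (birkhoffAverage ℝ W id n v)⟫_ℝ = 𝔼 k ∈ range n, ⟪u, (W ^ (N + k)) v⟫_ℝ := by
  simp only [birkhoffAverage_eq_smul_sum, map_smul, map_sum, inner_smul_right, inner_sum,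
    expect_eq_sum_div_card, card_range, ← zpow_natCast, zpow_apply_zpow]
  ring

theorem norm_birkhoffAverage_sq (v : H) (n : ℕ) :
    ‖birkhoffAverage ℝ W id n v‖ ^ 2 = diffAverage n fun d ↦ ⟪v, (W ^ d) v⟫_ℝ := by
  have h (u : H) : ⟪u, birkhoffAverage ℝ W id n v⟫_ℝ = 𝔼 l ∈ range n, ⟪u, (W ^ (l : ℤ)) v⟫_ℝ := by
    simpa using inner_zpow_birkhoffAverage W u v 0 n
  rw [← real_inner_self_eq_norm_sq, h, diffAverage_eq_expect_expect, expect_comm]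
  refine expect_congr rfl fun l _ ↦ ?_
  rw [real_inner_comm, h]
  exact expect_congr rfl fun k _ ↦ inner_zpow_zpow W _ _ v v

theorem norm_birkhoffAverage_le (v : H) (n : ℕ) : ‖birkhoffAverage ℝ W id n v‖ ≤ ‖v‖ := by
  rcases eq_or_ne n 0 with rfl | hn
  · simp
  rw [birkhoffAverage_eq_smul_sum, norm_smul, norm_inv, Real.norm_natCast,
    inv_mul_le_iff₀ (by positivity)]
  calc ‖∑ k ∈ range n, (W ^ k) v‖ ≤ ∑ k ∈ range n, ‖(W ^ k) v‖ := norm_sum_le _ _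
    _ = n * ‖v‖ := by simp

theorem subadditive_norm_birkhoffSum (v : H) :
    Subadditive fun n ↦ ‖birkhoffSum W id n v‖ := by
  intro m n
  have : birkhoffSum W id n ((⇑W)^[m] v) = (W ^ m) (birkhoffSum W id n v) := by
    simp only [birkhoffSum, id, coe_pow, map_sum]
    exact sum_congr rfl fun k _ ↦ by
      rw [← Function.iterate_add_apply, ← Function.iterate_add_apply, add_comm]
  dsimp only
  rw [birkhoffSum_add, this]
  exact (norm_add_le _ _).trans_eq (by rw [LinearIsometryEquiv.norm_map])

theorem norm_birkhoffAverage_le_add (v : H) {l n : ℕ} (hl : 0 < l) (hln : l ≤ n) :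
    ‖birkhoffAverage ℝ W id n v‖ ≤ ‖birkhoffAverage ℝ W id l v‖ + l / n * ‖v‖ := by
  set u : ℕ → ℝ := fun n ↦ ‖birkhoffSum W id n v‖
  have hu (r : ℕ) : u r ≤ r * ‖v‖ := by
    simpa [u, birkhoffSum, ← coe_pow] using norm_sum_le (range r) fun k ↦ (W ^ k) v
  have hA (m : ℕ) : ‖birkhoffAverage ℝ W id m v‖ = u m / m := by
    simp [u, birkhoffAverage, norm_smul, div_eq_inv_mul]
  have key := (subadditive_norm_birkhoffSum W v).apply_mul_add_le (n / l) l (n % l)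
  rw [Nat.div_add_mod'] at key
  have hn : (0 : ℝ) < n := by exact_mod_cast hl.trans_le hln
  have hql : ((n / l : ℕ) : ℝ) * l ≤ n := by exact_mod_cast Nat.div_mul_le_self n l
  have hr : ((n % l : ℕ) : ℝ) ≤ l := by exact_mod_cast (Nat.mod_lt n hl).le
  have h : u n ≤ n * (u l / l) + l * ‖v‖ :=
    calc u n ≤ (n / l : ℕ) * u l + (n % l : ℕ) * ‖v‖ := key.trans (by gcongr; exact hu _)
      _ = ((n / l : ℕ) * l) * (u l / l) + (n % l : ℕ) * ‖v‖ := by field_simp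
      _ ≤ n * (u l / l) + l * ‖v‖ := by gcongr
  rw [hA, hA]
  calc u n / n ≤ (n * (u l / l) + l * ‖v‖) / n := by gcongr
    _ = u l / l + l / n * ‖v‖ := by field_simp

theorem norm_birkhoffAverage_sq_le_add {v : H} (hv : ‖v‖ ≤ 1) {l n : ℕ} (hl : 0 < l)
    (hln : l ≤ n) :
    ‖birkhoffAverage ℝ W id n v‖ ^ 2 ≤ ‖birkhoffAverage ℝ W id l v‖ ^ 2 + 3 * l / n := by
  have h := norm_birkhoffAverage_le_add W v hl hln
  have hy := (norm_birkhoffAverage_le W v l).trans hv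
  have ht : (l : ℝ) / n ≤ 1 := div_le_one_of_le₀ (by exact_mod_cast hln) (by positivity)
  have ht0 : (0 : ℝ) ≤ l / n := by positivity
  have := mul_le_of_le_one_left ht0 hv
  rw [mul_div_assoc]
  nlinarith [norm_nonneg (birkhoffAverage ℝ W id n v), norm_nonneg (birkhoffAverage ℝ W id l v)]

theorem zpow_apply_eq_self {x : H} (hx : W x = x) (n : ℤ) : (W ^ n) x = x := by
  have hx' : W⁻¹ x = x := by rw [coe_inv, symm_apply_eq, hx]
  induction n using Int.induction_on with
  | zero => rfl
  | succ n ih => rw [zpow_add_one, coe_mul, Function.comp_apply, hx, ih]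
  | pred n ih => rw [zpow_sub_one, coe_mul, Function.comp_apply, hx', ih]

theorem diffAverage_norm_birkhoffAverage_sq_comm
    (hsymm : ∀ n m, ⟪g n, (W ^ m) (g n)⟫_ℝ = ⟪g m, (W ^ n) (g m)⟫_ℝ) (m n : ℕ) :
    (diffAverage m fun d ↦ ‖birkhoffAverage ℝ W id n (g d)‖ ^ 2) =
      diffAverage n fun d ↦ ‖birkhoffAverage ℝ W id m (g d)‖ ^ 2 := by
  simp only [norm_birkhoffAverage_sq, diffAverage]
  rw [expect_comm]
  simp only [hsymm]

-- The symmetry of the correlations trades the average over a window of `N`s for one over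
-- differences.
theorem expect_norm_birkhoffAverage_sq_eq
    (hsymm : ∀ n m, ⟪g n, (W ^ m) (g n)⟫_ℝ = ⟪g m, (W ^ n) (g m)⟫_ℝ) (N : ℤ) (m n : ℕ) :
    𝔼 j ∈ range n, ‖birkhoffAverage ℝ W id m (g (N + j))‖ ^ 2 =
      diffAverage m fun d ↦ ⟪g d, (W ^ N) (birkhoffAverage ℝ W id n (g d))⟫_ℝ := by
  simp only [norm_birkhoffAverage_sq, diffAverage, inner_zpow_birkhoffAverage]
  rw [expect_comm]
  simp only [hsymm]

variable [CompleteSpace H]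

noncomputable def fixedProj : H →L[ℝ] H := ((W : H →L[ℝ] H).eqLocus (1 : H →L[ℝ] H)).starProjection

theorem tendsto_birkhoffAverage_fixedProj (v : H) :
    Tendsto (birkhoffAverage ℝ W id · v) atTop (𝓝 (W.fixedProj v)) :=
  (W : H →L[ℝ] H).tendsto_birkhoffAverage_orthogonalProjection
    W.toLinearIsometry.norm_toContinuousLinearMap_le v

theorem apply_fixedProj (v : H) : W (W.fixedProj v) = W.fixedProj v :=
  ((W : H →L[ℝ] H).eqLocus (1 : H →L[ℝ] H)).starProjection_apply_mem v

theorem zpow_apply_fixedProj (n : ℤ) (v : H) : (W ^ n) (W.fixedProj v) = W.fixedProj v :=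
  W.zpow_apply_eq_self (W.apply_fixedProj v) n

theorem inner_fixedProj_self (v : H) : ⟪v, W.fixedProj v⟫_ℝ = ‖W.fixedProj v‖ ^ 2 := by
  have := ((W : H →L[ℝ] H).eqLocus (1 : H →L[ℝ] H)).re_inner_starProjection_eq_normSq v
  rwa [RCLike.re_to_real, real_inner_comm, Submodule.coe_norm,
    Submodule.coe_orthogonalProjectionOnto_apply] at this

theorem sq_inner_le_norm_fixedProj_sq {ι : H} (hι : W ι = ι) (hι₁ : ‖ι‖ = 1) (v : H) :
    ⟪v, ι⟫_ℝ ^ 2 ≤ ‖W.fixedProj v‖ ^ 2 := by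
  have : ⟪W.fixedProj v, ι⟫_ℝ = ⟪v, ι⟫_ℝ := by
    rw [fixedProj, Submodule.inner_starProjection_left_eq_right,
      Submodule.starProjection_eq_self_iff.2]
    simpa using hι
  rw [← this, ← sq_abs]
  gcongr
  simpa [hι₁] using abs_real_inner_le_norm (W.fixedProj v) ι

theorem abs_inner_zpow_birkhoffAverage_sub_le (u v : H) (N : ℤ) (n : ℕ) :
    |⟪u, (W ^ N) (birkhoffAverage ℝ W id n v)⟫_ℝ - ⟪u, W.fixedProj v⟫_ℝ| ≤
      ‖u‖ * ‖birkhoffAverage ℝ W id n v - W.fixedProj v‖ := by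
  conv_lhs => rw [← W.zpow_apply_fixedProj N v, ← inner_sub_right, ← map_sub]
  exact (abs_real_inner_le_norm _ _).trans_eq (by rw [LinearIsometryEquiv.norm_map])

theorem norm_birkhoffAverage_sq_eq_add {n : ℕ} (hn : n ≠ 0) (v : H) :
    ‖birkhoffAverage ℝ W id n v‖ ^ 2 =
      ‖W.fixedProj v‖ ^ 2 + ‖birkhoffAverage ℝ W id n v - W.fixedProj v‖ ^ 2 := by
  have : ⟪W.fixedProj v, birkhoffAverage ℝ W id n v⟫_ℝ = ‖W.fixedProj v‖ ^ 2 := by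
    have h := inner_zpow_birkhoffAverage W (W.fixedProj v) v 0 n
    rw [zpow_zero] at h
    refine h.trans ((expect_congr rfl fun k _ ↦ ?_).trans (expect_const (by simpa) _))
    have := (W ^ (k : ℤ)).inner_map_map (W.fixedProj v) v
    rw [zpow_apply_fixedProj] at this
    rw [zero_add, this, real_inner_comm, inner_fixedProj_self]
  rw [norm_sub_sq_real, real_inner_comm, this]
  ring

theorem tendsto_expect_norm_birkhoffAverage_sq {ι : Type*} (s : Finset ι) (v : ι → H) :
    Tendsto (fun n ↦ 𝔼 i ∈ s, ‖birkhoffAverage ℝ W id (n + 1) (v i)‖ ^ 2) atTop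
      (𝓝 (𝔼 i ∈ s, ‖W.fixedProj (v i)‖ ^ 2)) :=
  tendsto_finsetExpect s fun i _ ↦
    ((W.tendsto_birkhoffAverage_fixedProj (v i)).comp (tendsto_add_atTop_nat 1)).norm.pow 2

theorem tendsto_diffAverage_norm_birkhoffAverage_sq (m : ℕ) :
    Tendsto (fun n ↦ diffAverage m fun d ↦ ‖birkhoffAverage ℝ W id (n + 1) (g d)‖ ^ 2) atTop
      (𝓝 (diffAverage m fun d ↦ ‖W.fixedProj (g d)‖ ^ 2)) := by
  unfold diffAverage
  exact W.tendsto_expect_norm_birkhoffAverage_sq (range m ×ˢ range m) fun p ↦ g ((p.1 : ℤ) - p.2)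

theorem abs_diffAverage_inner_sub_le (hg : ∀ n, ‖g n‖ ≤ 1) (N : ℤ) (m : ℕ) {n : ℕ}
    (hn : n ≠ 0) :
    |(diffAverage m fun d ↦ ⟪g d, (W ^ N) (birkhoffAverage ℝ W id n (g d))⟫_ℝ) -
        diffAverage m fun d ↦ ‖W.fixedProj (g d)‖ ^ 2| ≤
      √((diffAverage m fun d ↦ ‖birkhoffAverage ℝ W id n (g d)‖ ^ 2) -
        diffAverage m fun d ↦ ‖W.fixedProj (g d)‖ ^ 2) := by
  set r : ℤ → ℝ := fun d ↦ ‖birkhoffAverage ℝ W id n (g d) - W.fixedProj (g d)‖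
  have hr (d : ℤ) : |⟪g d, (W ^ N) (birkhoffAverage ℝ W id n (g d))⟫_ℝ - ‖W.fixedProj (g d)‖ ^ 2|
      ≤ r d := by
    rw [← inner_fixedProj_self]
    exact (W.abs_inner_zpow_birkhoffAverage_sub_le _ _ N n).trans
      (mul_le_of_le_one_left (norm_nonneg _) (hg d))
  simp only [diffAverage, ← expect_sub_distrib]
  calc _ ≤ 𝔼 p ∈ range m ×ˢ range m, r ((p.1 : ℤ) - p.2) :=
        (abs_expect_le _ _).trans (expect_le_expect fun p _ ↦ hr _)
    _ ≤ _ := (expect_le_sqrt_expect_sq _ _).trans_eq <| congrArg _ <|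
        expect_congr rfl fun _ _ ↦ by simp only [r, W.norm_birkhoffAverage_sq_eq_add hn]; ring

theorem exists_tendsto_diffAverage_norm_fixedProj_sq (hg : ∀ n, ‖g n‖ ≤ 1)
    (hsymm : ∀ n m, ⟪g n, (W ^ m) (g n)⟫_ℝ = ⟪g m, (W ^ n) (g m)⟫_ℝ) :
    ∃ c, Tendsto (fun m ↦ diffAverage (m + 1) fun d ↦ ‖W.fixedProj (g d)‖ ^ 2) atTop (𝓝 c) ∧
      Tendsto (fun m ↦ diffAverage (m + 1) fun d ↦ ‖birkhoffAverage ℝ W id (m + 1) (g d)‖ ^ 2)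
        atTop (𝓝 c) := by
  set a : ℕ → ℝ := fun m ↦ diffAverage (m + 1) fun d ↦ ‖W.fixedProj (g d)‖ ^ 2
  set w : ℕ → ℕ → ℝ := fun m n ↦
    diffAverage (m + 1) fun d ↦ ‖birkhoffAverage ℝ W id (n + 1) (g d)‖ ^ 2
  have hle (m n : ℕ) : a m ≤ w m n := expect_le_expect fun _ _ ↦ by
    dsimp only
    rw [W.norm_birkhoffAverage_sq_eq_add n.add_one_ne_zero]
    exact le_add_of_nonneg_right (sq_nonneg _)
  have hblock (l m n : ℕ) (hln : l ≤ n) : w m n ≤ w m l + 3 * (l + 1) / (n + 1) := by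
    have hne : (range (m + 1) ×ˢ range (m + 1)).Nonempty := by simp
    simp only [w, diffAverage]
    rw [← expect_const hne (3 * ((l : ℝ) + 1) / (n + 1)), ← expect_add_distrib]
    refine expect_le_expect fun _ _ ↦ ?_
    exact_mod_cast W.norm_birkhoffAverage_sq_le_add (hg _) l.succ_pos (Nat.succ_le_succ hln)
  have hbdd : BddBelow (Set.range a) :=
    ⟨0, Set.forall_mem_range.2 fun m ↦ expect_nonneg fun _ _ ↦ sq_nonneg _⟩
  exact ⟨_, tendsto_iInf_and_tendsto_diag_of_symmetric (w := w) 3 hbdd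
    (fun m n ↦ W.diffAverage_norm_birkhoffAverage_sq_comm hsymm (m + 1) (n + 1))
    (fun m ↦ W.tendsto_diffAverage_norm_birkhoffAverage_sq (m + 1)) hle hblock⟩

theorem exists_tendsto_zero_expect_norm_birkhoffAverage_sub_sq_le (hg : ∀ n, ‖g n‖ ≤ 1)
    (hsymm : ∀ n m, ⟪g n, (W ^ m) (g n)⟫_ℝ = ⟪g m, (W ^ n) (g m)⟫_ℝ) :
    ∃ δ : ℕ → ℝ, Tendsto δ atTop (𝓝 0) ∧ ∀ M N, 𝔼 j ∈ range (M + 1),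
      ‖birkhoffAverage ℝ W id (M + 1) (g (N + j)) - W.fixedProj (g (N + j))‖ ^ 2 ≤ δ M := by
  obtain ⟨c, ha, hdiag⟩ := W.exists_tendsto_diffAverage_norm_fixedProj_sq hg hsymm
  set a : ℕ → ℝ := fun m ↦ diffAverage (m + 1) fun d ↦ ‖W.fixedProj (g d)‖ ^ 2
  set w : ℕ → ℕ → ℝ := fun m n ↦
    diffAverage (m + 1) fun d ↦ ‖birkhoffAverage ℝ W id (n + 1) (g d)‖ ^ 2
  refine ⟨fun M ↦ a M + √(w M M - a M) - (c - √(a M - c)), ?_, fun M N ↦ ?_⟩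
  · have h₁ := (hdiag.sub ha).sqrt
    have h₂ := (ha.sub_const c).sqrt
    simp only [sub_self, Real.sqrt_zero] at h₁ h₂
    simpa using (ha.add h₁).sub ((tendsto_const_nhds (x := c)).sub h₂)
  have hupper : 𝔼 j ∈ range (M + 1), ‖birkhoffAverage ℝ W id (M + 1) (g (N + j))‖ ^ 2 ≤
      a M + √(w M M - a M) := by
    rw [W.expect_norm_birkhoffAverage_sq_eq hsymm N]
    linarith [abs_le.1 (W.abs_diffAverage_inner_sub_le hg N (M + 1) M.add_one_ne_zero)]
  have hlower : c - √(a M - c) ≤ 𝔼 j ∈ range (M + 1), ‖W.fixedProj (g (N + j))‖ ^ 2 := by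
    have hcol : Tendsto (fun m ↦ w m M) atTop (𝓝 (a M)) :=
      (W.tendsto_diffAverage_norm_birkhoffAverage_sq _).congr fun m ↦
        W.diffAverage_norm_birkhoffAverage_sq_comm hsymm _ _
    refine le_of_tendsto_of_tendsto (ha.sub (hcol.sub ha).sqrt)
      (W.tendsto_expect_norm_birkhoffAverage_sq _ _) (.of_forall fun m ↦ ?_)
    dsimp only
    rw [W.expect_norm_birkhoffAverage_sq_eq hsymm N]
    linarith [abs_le.1 (W.abs_diffAverage_inner_sub_le hg N (m + 1) M.add_one_ne_zero)]
  calc _ = 𝔼 j ∈ range (M + 1), ‖birkhoffAverage ℝ W id (M + 1) (g (N + j))‖ ^ 2 -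
          𝔼 j ∈ range (M + 1), ‖W.fixedProj (g (N + j))‖ ^ 2 := by
        rw [← expect_sub_distrib]
        exact expect_congr rfl fun j _ ↦ by
          rw [W.norm_birkhoffAverage_sq_eq_add M.add_one_ne_zero]; ring
    _ ≤ _ := by linarith

theorem eventually_expect_norm_fixedProj_sq_sub_lt_expect_expect (hg : ∀ n, ‖g n‖ ≤ 1)
    (hsymm : ∀ n m, ⟪g n, (W ^ m) (g n)⟫_ℝ = ⟪g m, (W ^ n) (g m)⟫_ℝ) {ε : ℝ} (hε : 0 < ε) :
    ∀ᶠ M in atTop, ∀ N₁ N₂ : ℤ, 𝔼 j ∈ range (M + 1), ‖W.fixedProj (g (N₁ + j))‖ ^ 2 - ε <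
      𝔼 j ∈ range (M + 1), 𝔼 i ∈ range (M + 1), ⟪g (N₁ + j), (W ^ (N₂ + i)) (g (N₁ + j))⟫_ℝ := by
  obtain ⟨δ, hδ, hδle⟩ := W.exists_tendsto_zero_expect_norm_birkhoffAverage_sub_sq_le hg hsymm
  filter_upwards [hδ.sqrt.eventually (gt_mem_nhds (by simpa))] with M hM N₁ N₂
  set r : ℤ → ℝ := fun n ↦ ‖birkhoffAverage ℝ W id (M + 1) (g n) - W.fixedProj (g n)‖
  have hr : 𝔼 j ∈ range (M + 1), r (N₁ + j) < ε :=
    ((expect_le_sqrt_expect_sq _ _).trans (Real.sqrt_le_sqrt (hδle M N₁))).trans_lt hM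
  have hpt (n : ℤ) : ‖W.fixedProj (g n)‖ ^ 2 - r n ≤
      𝔼 i ∈ range (M + 1), ⟪g n, (W ^ (N₂ + i)) (g n)⟫_ℝ := by
    rw [← inner_zpow_birkhoffAverage, ← inner_fixedProj_self]
    linarith [abs_le.1 ((W.abs_inner_zpow_birkhoffAverage_sub_le (g n) (g n) N₂ (M + 1)).trans
      (mul_le_of_le_one_left (norm_nonneg _) (hg n)))]
  calc _ < 𝔼 j ∈ range (M + 1), ‖W.fixedProj (g (N₁ + j))‖ ^ 2 -
        𝔼 j ∈ range (M + 1), r (N₁ + j) := by linarith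
    _ ≤ _ := by rw [← expect_sub_distrib]; exact expect_le_expect fun j _ ↦ hpt _

theorem eventually_inner_pow_four_sub_lt_expect_sq {ι f : H} (hι : W ι = ι) (hι₁ : ‖ι‖ = 1)
    (hf : ‖f‖ ≤ 1) {ε : ℝ} (hε : 0 < ε) :
    ∀ᶠ M in atTop, ∀ N : ℤ,
      ⟪f, ι⟫_ℝ ^ 4 - ε < 𝔼 j ∈ range (M + 1), ⟪f, (W ^ (N + j)) f⟫_ℝ ^ 2 := by
  have hlim : Tendsto (fun M ↦ ‖birkhoffAverage ℝ W id (M + 1) f - W.fixedProj f‖) atTop (𝓝 0) := by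
    simpa using (((W.tendsto_birkhoffAverage_fixedProj f).comp (tendsto_add_atTop_nat 1)).sub_const
      (W.fixedProj f)).norm
  filter_upwards [hlim.eventually (gt_mem_nhds (half_pos hε))] with M hM N
  set b := ⟪f, ι⟫_ℝ ^ 2
  set t := 𝔼 j ∈ range (M + 1), ⟪f, (W ^ (N + j)) f⟫_ℝ
  have hb₁ : b ≤ 1 := by
    have := abs_real_inner_le_norm f ι
    rw [hι₁, mul_one] at this
    simpa [b, sq_abs] using pow_le_one₀ (abs_nonneg _) (this.trans hf) (n := 2)
  have ht : b - ε / 2 < t := by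
    have h := W.abs_inner_zpow_birkhoffAverage_sub_le f f N (M + 1)
    rw [inner_zpow_birkhoffAverage, inner_fixedProj_self] at h
    have := W.sq_inner_le_norm_fixedProj_sq hι hι₁ f
    linarith [abs_le.1 (h.trans (mul_le_of_le_one_left (norm_nonneg _) hf))]
  have hsq : b ^ 2 - ε < t ^ 2 := by
    rcases le_or_gt b (ε / 2) with hbε | hbε
    · nlinarith [sq_nonneg t, sq_nonneg ⟪f, ι⟫_ℝ]
    · nlinarith
  calc ⟪f, ι⟫_ℝ ^ 4 - ε = b ^ 2 - ε := by ring
    _ < t ^ 2 := hsq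
    _ ≤ _ := sq_expect_le_expect_sq _ _

theorem eventually_inner_pow_four_sub_lt_expect_expect (hg : ∀ n, ‖g n‖ ≤ 1)
    (hsymm : ∀ n m, ⟪g n, (W ^ m) (g n)⟫_ℝ = ⟪g m, (W ^ n) (g m)⟫_ℝ) {ι f : H} (hι : W ι = ι)
    (hι₁ : ‖ι‖ = 1) (hf : ‖f‖ ≤ 1) (hgι : ∀ n, ⟪g n, ι⟫_ℝ = ⟪f, (W ^ n) f⟫_ℝ) {ε : ℝ}
    (hε : 0 < ε) :
    ∀ᶠ M in atTop, ∀ N₁ N₂ : ℤ, ⟪f, ι⟫_ℝ ^ 4 - ε <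
      𝔼 j ∈ range (M + 1), 𝔼 i ∈ range (M + 1), ⟪g (N₁ + j), (W ^ (N₂ + i)) (g (N₁ + j))⟫_ℝ := by
  filter_upwards [W.eventually_expect_norm_fixedProj_sq_sub_lt_expect_expect hg hsymm (half_pos hε),
    W.eventually_inner_pow_four_sub_lt_expect_sq hι hι₁ hf (half_pos hε)] with M h₁ h₂ N₁ N₂
  have : 𝔼 j ∈ range (M + 1), ⟪f, (W ^ (N₁ + j)) f⟫_ℝ ^ 2 ≤
      𝔼 j ∈ range (M + 1), ‖W.fixedProj (g (N₁ + j))‖ ^ 2 :=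
    expect_le_expect fun j _ ↦ hgι (N₁ + j) ▸ W.sq_inner_le_norm_fixedProj_sq hι hι₁ _
  linarith [h₁ N₁ N₂, h₂ N₁]

end LinearIsometryEquiv

namespace MeasureTheory

variable {X : Type*} [MeasurableSpace X] {μ : Measure X} {T : Equiv.Perm X}

theorem MeasurePreserving.perm_zpow (hT : MeasurePreserving T μ μ)
    (hT' : MeasurePreserving T.symm μ μ) (n : ℤ) : MeasurePreserving ⇑(T ^ n) μ μ := by
  obtain ⟨k, rfl | rfl⟩ := n.eq_nat_or_neg
  · simpa [← Equiv.Perm.iterate_eq_pow] using hT.iterate k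
  · rw [zpow_neg, zpow_natCast, ← inv_pow, ← Equiv.Perm.iterate_eq_pow]
    exact hT'.iterate k

namespace Lp

variable {E : Type*} [NormedAddCommGroup E] {p : ENNReal}

theorem compMeasurePreserving_congr {f f' : X → X} (h : f = f') (hf : MeasurePreserving f μ μ)
    (hf' : MeasurePreserving f' μ μ) (u : Lp E p μ) :
    compMeasurePreserving f hf u = compMeasurePreserving f' hf' u := by
  subst h; rfl

variable (μ) [NormedSpace ℝ E] [Fact (1 ≤ p)]

noncomputable def koopman (hT : MeasurePreserving T μ μ) (hT' : MeasurePreserving T.symm μ μ) :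
    Lp E p μ ≃ₗᵢ[ℝ] Lp E p μ where
  toLinearEquiv := .ofLinearMap (compMeasurePreservingₗ ℝ T hT)
    (compMeasurePreservingₗ ℝ T.symm hT')
    (LinearMap.ext fun u ↦ by simp [← compMeasurePreserving_comp_apply])
    (LinearMap.ext fun u ↦ by simp [← compMeasurePreserving_comp_apply])
  norm_map' u := norm_compMeasurePreserving u hT

variable {μ}

theorem koopman_zpow_apply (hT : MeasurePreserving T μ μ) (hT' : MeasurePreserving T.symm μ μ)
    (n : ℤ) (u : Lp E p μ) :
    (koopman μ hT hT' ^ n) u = compMeasurePreserving (⇑(T ^ n)) (hT.perm_zpow hT' n) u := by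
  induction n using Int.induction_on generalizing u with
  | zero => simp
  | succ n ih =>
    rw [zpow_add_one, LinearIsometryEquiv.coe_mul, Function.comp_apply, ih]
    refine (compMeasurePreserving_comp_apply u hT _).symm.trans
      (compMeasurePreserving_congr ?_ _ _ u)
    rw [add_comm, zpow_add, zpow_one, Equiv.Perm.coe_mul]
  | pred n ih =>
    rw [zpow_sub_one, LinearIsometryEquiv.coe_mul, Function.comp_apply, ih]
    refine (compMeasurePreserving_comp_apply u hT' _).symm.trans
      (compMeasurePreserving_congr ?_ _ _ u)
    rw [sub_eq_neg_add, zpow_add, zpow_neg_one, Equiv.Perm.coe_mul]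
    rfl

theorem inner_indicatorConstLp_koopman_zpow [IsFiniteMeasure μ] (hT : MeasurePreserving T μ μ)
    (hT' : MeasurePreserving T.symm μ μ) (n : ℤ) {s t : Set X} (hs : MeasurableSet s)
    (ht : MeasurableSet t) :
    ⟪indicatorConstLp 2 hs (measure_ne_top μ s) (1 : ℝ),
      (koopman μ hT hT' ^ n) (indicatorConstLp 2 ht (measure_ne_top μ t) 1)⟫_ℝ =
        μ.real (s ∩ ⇑(T ^ n) ⁻¹' t) := by
  rw [koopman_zpow_apply, indicatorConstLp_compMeasurePreserving,
    L2.real_inner_indicatorConstLp_one_indicatorConstLp_one]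

theorem koopman_indicatorConstLp_univ [IsFiniteMeasure μ] (hT : MeasurePreserving T μ μ)
    (hT' : MeasurePreserving T.symm μ μ) (c : E) :
    koopman μ hT hT' (indicatorConstLp p .univ (measure_ne_top μ _) c) =
      indicatorConstLp p .univ (measure_ne_top μ _) c := by
  show compMeasurePreserving T hT _ = _
  rw [indicatorConstLp_compMeasurePreserving]
  simp

end Lp

theorem norm_indicatorConstLp_one_le [IsProbabilityMeasure μ] {p : ENNReal} {s : Set X}
    (hs : MeasurableSet s) : ‖indicatorConstLp p hs (measure_ne_top μ s) (1 : ℝ)‖ ≤ 1 := by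
  refine norm_indicatorConstLp_le.trans ?_
  rw [norm_one, one_mul]
  exact Real.rpow_le_one measureReal_nonneg measureReal_le_one (by positivity)

theorem eventually_measureReal_pow_four_sub_lt_expect_expect [IsProbabilityMeasure μ]
    (hT : MeasurePreserving T μ μ) (hT' : MeasurePreserving T.symm μ μ) {B : Set X}
    (hB : MeasurableSet B) {ε : ℝ} (hε : 0 < ε) :
    ∀ᶠ M in atTop, ∀ N₁ N₂ : ℤ, μ.real B ^ 4 - ε < 𝔼 j ∈ range (M + 1), 𝔼 i ∈ range (M + 1),
      μ.real (B ∩ ⇑(T ^ (N₁ + j)) ⁻¹' B ∩ ⇑(T ^ (N₂ + i)) ⁻¹' (B ∩ ⇑(T ^ (N₁ + j)) ⁻¹' B)) := by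
  let W := Lp.koopman (E := ℝ) (p := 2) μ hT hT'
  have hC (n : ℤ) : MeasurableSet (B ∩ ⇑(T ^ n) ⁻¹' B) :=
    hB.inter (hB.preimage (hT.perm_zpow hT' n).measurable)
  let g : ℤ → Lp ℝ 2 μ := fun n ↦ indicatorConstLp 2 (hC n) (measure_ne_top μ _) 1
  let f : Lp ℝ 2 μ := indicatorConstLp 2 hB (measure_ne_top μ _) 1
  let ι : Lp ℝ 2 μ := indicatorConstLp 2 .univ (measure_ne_top μ _) 1
  have hθ (n m : ℤ) : ⟪g n, (W ^ m) (g n)⟫_ℝ =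
      μ.real (B ∩ ⇑(T ^ n) ⁻¹' B ∩ ⇑(T ^ m) ⁻¹' (B ∩ ⇑(T ^ n) ⁻¹' B)) :=
    Lp.inner_indicatorConstLp_koopman_zpow hT hT' m (hC n) (hC n)
  have hsymm (n m : ℤ) : ⟪g n, (W ^ m) (g n)⟫_ℝ = ⟪g m, (W ^ n) (g m)⟫_ℝ := by
    rw [hθ, hθ]
    congr 1
    ext x
    simp only [Set.mem_inter_iff, Set.mem_preimage, ← Equiv.Perm.mul_apply,
      ((Commute.refl T).zpow_zpow n m).eq]
    tauto
  have hgι (n : ℤ) : ⟪g n, ι⟫_ℝ = ⟪f, (W ^ n) f⟫_ℝ := by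
    rw [Lp.inner_indicatorConstLp_koopman_zpow hT hT' n hB hB,
      L2.real_inner_indicatorConstLp_one_indicatorConstLp_one, Set.inter_univ]
  have hfι : ⟪f, ι⟫_ℝ = μ.real B := by
    rw [L2.real_inner_indicatorConstLp_one_indicatorConstLp_one, Set.inter_univ]
  have key := W.eventually_inner_pow_four_sub_lt_expect_expect (g := g) (ι := ι) (f := f)
    (fun n ↦ norm_indicatorConstLp_one_le (hC n)) hsymm
    (Lp.koopman_indicatorConstLp_univ hT hT' 1)
    ((norm_indicatorConstLp two_ne_zero ENNReal.ofNat_ne_top).trans (by simp))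
    (norm_indicatorConstLp_one_le hB) hgι hε
  simpa only [hθ, hfι] using key

end MeasureTheory

/-- Bergelson. For an invertible measure-preserving transformation `T` of a
probability space and any measurable `B` and `c > 0`, the set of `(n, m) ∈ ℤ²` with
`μ(B ∩ T^{-n}B ∩ T^{-m}(B ∩ T^{-n}B)) > μ(B)⁴ - c` meets every sufficiently large square:
there is `M₀` such that for all `M ≥ M₀` and all `N₁, N₂ ∈ ℤ` it intersects
`[N₁, N₁+M] × [N₂, N₂+M]`. -/
theorem bergelson_square_recurrence
    {X : Type*} [MeasurableSpace X] (μ : MeasureTheory.Measure X)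
    [MeasureTheory.IsProbabilityMeasure μ]
    (T : Equiv.Perm X)
    (hT : MeasureTheory.MeasurePreserving T μ μ)
    (hT_symm : Measurable ⇑T.symm)
    (B : Set X) (hB : MeasurableSet B) :
    ∀ c > (0 : ℝ), ∃ M₀ : ℕ, ∀ M : ℕ, M₀ ≤ M → ∀ N₁ N₂ : ℤ,
      ∃ n m : ℤ, n ∈ Set.Icc N₁ (N₁ + M) ∧ m ∈ Set.Icc N₂ (N₂ + M) ∧
        (μ (B ∩ (⇑(T ^ n) ⁻¹' B) ∩ (⇑(T ^ m) ⁻¹' (B ∩ (⇑(T ^ n) ⁻¹' B))))).toReal >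
          (μ B).toReal ^ 4 - c := by
  intro c hc
  have hT' : MeasureTheory.MeasurePreserving T.symm μ μ := hT.symm ⟨T, hT.measurable, hT_symm⟩
  obtain ⟨M₀, hM₀⟩ := eventually_atTop.1
    (MeasureTheory.eventually_measureReal_pow_four_sub_lt_expect_expect hT hT' hB hc)
  refine ⟨M₀, fun M hM N₁ N₂ ↦ ?_⟩
  obtain ⟨n, hn, m, hm, h⟩ := exists_mem_Icc_lt_of_lt_expect_expect
    (F := fun n m ↦ μ.real (B ∩ ⇑(T ^ n) ⁻¹' B ∩ ⇑(T ^ m) ⁻¹' (B ∩ ⇑(T ^ n) ⁻¹' B)))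
    (hM₀ M hM N₁ N₂)
  exact ⟨n, m, hn, hm, h⟩
end
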